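/- Let k ≥ 2 be an integer and let P' = P'_{8·3^k} be the presented group ⟨x, y, z ∣ x² = (xy)², (xy)² = y², z x z^{-1} = y, z y z^{-1} = x y, z^{3^k} = 1⟩. Then for every natural number r: y z^r y^{-1} = z^r if r ≡ 0 (mod 3); y z^r y^{-1} = x^{-1} z^r if r ≡ 1 (mod 3); and y z^r y^{-1} = x y z^r if r ≡ 2 (mod 3). -/

import Mathlib

/-- The relations of the presented group
`P'_{8·3^k} = ⟨x, y, z ∣ x² = (xy)², (xy)² = y², z x z⁻¹ = y, z y z⁻¹ = x y, z^{3^k} = 1⟩`,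
where `x` is the first generator, `y` the second and `z` the third one. -/
def Prels (k : ℕ) : Set (FreeGroup (Fin 3)) :=
  {FreeGroup.of 0 ^ 2 * ((FreeGroup.of 0 * FreeGroup.of 1) ^ 2)⁻¹,
   (FreeGroup.of 0 * FreeGroup.of 1) ^ 2 * (FreeGroup.of 1 ^ 2)⁻¹,
   FreeGroup.of 2 * FreeGroup.of 0 * (FreeGroup.of 2)⁻¹ * (FreeGroup.of 1)⁻¹,
   FreeGroup.of 2 * FreeGroup.of 1 * (FreeGroup.of 2)⁻¹ *
     (FreeGroup.of 0 * FreeGroup.of 1)⁻¹,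
   FreeGroup.of 2 ^ (3 ^ k)}

/-- The presented group `P'_{8·3^k}`. -/
abbrev PGroup (k : ℕ) : Type := PresentedGroup (Prels k)

/-- The generator `x` of `P'_{8·3^k}`. -/
noncomputable def Px (k : ℕ) : PGroup k := PresentedGroup.of 0

/-- The generator `y` of `P'_{8·3^k}`. -/
noncomputable def Py (k : ℕ) : PGroup k := PresentedGroup.of 1

/-- The generator `z` of `P'_{8·3^k}`. -/
noncomputable def Pz (k : ℕ) : PGroup k := PresentedGroup.of 2

lemma Prel_eq_one {k : ℕ} {w : FreeGroup (Fin 3)} (h : w ∈ Prels k) :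
    (QuotientGroup.mk w : PGroup k) = 1 :=
  (QuotientGroup.eq_one_iff w).mpr (Subgroup.subset_normalClosure h)

/-- `z x = y z`. -/
lemma Pzx (k : ℕ) : Pz k * Px k = Py k * Pz k := by
  have := Prel_eq_one (k := k)
    (w := FreeGroup.of 2 * FreeGroup.of 0 * (FreeGroup.of 2)⁻¹ * (FreeGroup.of 1)⁻¹)
    (by simp [Prels])
  simp only [QuotientGroup.mk_mul, QuotientGroup.mk_inv] at this
  rw [mul_inv_eq_one, mul_inv_eq_iff_eq_mul] at this
  simp only [Px, Py, Pz, PresentedGroup.of]; exact this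

/-- `z y = x y z`. -/
lemma Pzy (k : ℕ) : Pz k * Py k = Px k * Py k * Pz k := by
  have := Prel_eq_one (k := k)
    (w := FreeGroup.of 2 * FreeGroup.of 1 * (FreeGroup.of 2)⁻¹ *
      (FreeGroup.of 0 * FreeGroup.of 1)⁻¹)
    (by simp [Prels])
  simp only [QuotientGroup.mk_mul, QuotientGroup.mk_inv] at this
  rw [mul_inv_eq_one, mul_inv_eq_iff_eq_mul] at this
  simp only [Px, Py, Pz, PresentedGroup.of]; exact this

/-- `x² = (xy)²`. -/
lemma Psq1 (k : ℕ) : Px k ^ 2 = (Px k * Py k) ^ 2 := by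
  have := Prel_eq_one (k := k)
    (w := FreeGroup.of 0 ^ 2 * ((FreeGroup.of 0 * FreeGroup.of 1) ^ 2)⁻¹)
    (by simp [Prels])
  simp only [QuotientGroup.mk_mul, QuotientGroup.mk_inv, QuotientGroup.mk_pow] at this
  rw [mul_inv_eq_one] at this
  simp only [Px, Py, Pz, PresentedGroup.of]; exact this

/-- `(xy)² = y²`. -/
lemma Psq2 (k : ℕ) : (Px k * Py k) ^ 2 = Py k ^ 2 := by
  have := Prel_eq_one (k := k)
    (w := (FreeGroup.of 0 * FreeGroup.of 1) ^ 2 * (FreeGroup.of 1 ^ 2)⁻¹)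
    (by simp [Prels])
  simp only [QuotientGroup.mk_mul, QuotientGroup.mk_inv, QuotientGroup.mk_pow] at this
  rw [mul_inv_eq_one] at this
  simp only [Px, Py, Pz, PresentedGroup.of]; exact this

/-- `x y x = y`. -/
lemma Pxyx (k : ℕ) : Px k * Py k * Px k = Py k := by
  have h := Psq2 k
  rw [sq, sq] at h
  have h2 : Px k * Py k * Px k * Py k = Py k * Py k := by
    rw [mul_assoc (Px k * Py k)]; exact h
  exact mul_right_cancel h2

/-- `y x y = x`. -/
lemma Pyxy (k : ℕ) : Py k * Px k * Py k = Px k := by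
  have h1 : Py k * Px k = (Px k)⁻¹ * Py k := by
    rw [eq_inv_mul_iff_mul_eq, ← mul_assoc]; exact Pxyx k
  have hsq : Py k * Py k = Px k * Px k := by
    rw [← sq, ← sq]; exact ((Psq1 k).trans (Psq2 k)).symm
  calc Py k * Px k * Py k = (Px k)⁻¹ * Py k * Py k := by rw [h1]
    _ = (Px k)⁻¹ * (Py k * Py k) := by rw [mul_assoc]
    _ = (Px k)⁻¹ * (Px k * Px k) := by rw [hsq]
    _ = Px k := by rw [← mul_assoc, inv_mul_cancel, one_mul]

/-- `x⁻¹ y⁻¹ = x y`. -/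
lemma Pinv (k : ℕ) : (Px k)⁻¹ * (Py k)⁻¹ = Px k * Py k := by
  have hxy : Px k * Py k = (Py k)⁻¹ * Px k := by
    rw [eq_inv_mul_iff_mul_eq, ← mul_assoc]; exact Pyxy k
  have h4 : (Px k * Py k) * (Py k * Px k) = 1 := by
    rw [hxy]
    calc (Py k)⁻¹ * Px k * (Py k * Px k)
        = (Py k)⁻¹ * (Px k * Py k * Px k) := by simp only [mul_assoc]
      _ = (Py k)⁻¹ * Py k := by rw [Pxyx]
      _ = 1 := inv_mul_cancel _
  calc (Px k)⁻¹ * (Py k)⁻¹ = (Py k * Px k)⁻¹ := (mul_inv_rev _ _).symm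
    _ = Px k * Py k := inv_eq_of_mul_eq_one_left h4

/-- conjugating element for `x` by powers of `z`. -/
noncomputable def Pf (k m : ℕ) : PGroup k :=
  if m % 3 = 0 then Px k else if m % 3 = 1 then Py k else Px k * Py k

lemma Pz_pow_x (k r : ℕ) : Pz k ^ r * Px k = Pf k r * Pz k ^ r := by
  induction r with
  | zero => simp [Pf]
  | succ n ih =>
    have key : Pz k * Pf k n = Pf k (n + 1) * Pz k := by
      have h3 : n % 3 = 0 ∨ n % 3 = 1 ∨ n % 3 = 2 := by omega
      rcases h3 with h | h | h
      · have h' : (n + 1) % 3 = 1 := by omega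
        simp only [Pf, h, h']
        norm_num
        exact Pzx k
      · have h' : (n + 1) % 3 = 2 := by omega
        simp only [Pf, h, h']
        norm_num
        exact Pzy k
      · have h' : (n + 1) % 3 = 0 := by omega
        simp only [Pf, h, h']
        norm_num
        calc Pz k * (Px k * Py k) = Pz k * Px k * Py k := by rw [mul_assoc]
          _ = Py k * Pz k * Py k := by rw [Pzx]
          _ = Py k * (Px k * Py k * Pz k) := by rw [mul_assoc, Pzy]
          _ = Py k * Px k * Py k * Pz k := by simp only [mul_assoc]
          _ = Px k * Pz k := by rw [Pyxy]
    calc Pz k ^ (n + 1) * Px k = Pz k * (Pz k ^ n * Px k) := by rw [pow_succ', mul_assoc]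
      _ = Pz k * (Pf k n * Pz k ^ n) := by rw [ih]
      _ = Pz k * Pf k n * Pz k ^ n := by rw [mul_assoc]
      _ = Pf k (n + 1) * Pz k * Pz k ^ n := by rw [key]
      _ = Pf k (n + 1) * Pz k ^ (n + 1) := by rw [pow_succ', mul_assoc]

lemma Pz_pow_xinv (k r : ℕ) : Pz k ^ r * (Px k)⁻¹ = (Pf k r)⁻¹ * Pz k ^ r := by
  calc Pz k ^ r * (Px k)⁻¹
      = (Pf k r)⁻¹ * (Pf k r * Pz k ^ r) * (Px k)⁻¹ := by
        rw [← mul_assoc, inv_mul_cancel, one_mul]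
    _ = (Pf k r)⁻¹ * (Pz k ^ r * Px k) * (Px k)⁻¹ := by rw [Pz_pow_x]
    _ = (Pf k r)⁻¹ * Pz k ^ r := by
        simp only [mul_assoc, mul_inv_cancel, mul_one]

/-- conjugating element for powers of `z` by `y`. -/
noncomputable def Pc (k m : ℕ) : PGroup k :=
  if m % 3 = 0 then 1 else if m % 3 = 1 then (Px k)⁻¹ else Px k * Py k

lemma Py_z_pow (k r : ℕ) : Py k * Pz k ^ r = Pc k r * Pz k ^ r * Py k := by
  induction r with
  | zero => simp [Pc]
  | succ n ih =>
    have hyz : Py k * Pz k = (Px k)⁻¹ * Pz k * Py k := by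
      calc Py k * Pz k = ((Px k)⁻¹ * Px k) * (Py k * Pz k) := by
            rw [inv_mul_cancel, one_mul]
        _ = (Px k)⁻¹ * (Px k * Py k * Pz k) := by simp only [mul_assoc]
        _ = (Px k)⁻¹ * (Pz k * Py k) := by rw [Pzy]
        _ = (Px k)⁻¹ * Pz k * Py k := by rw [mul_assoc]
    have key : Pc k n * (Pf k n)⁻¹ = Pc k (n + 1) := by
      have h3 : n % 3 = 0 ∨ n % 3 = 1 ∨ n % 3 = 2 := by omega
      rcases h3 with h | h | h
      · have h' : (n + 1) % 3 = 1 := by omega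
        simp [Pc, Pf, h, h']
      · have h' : (n + 1) % 3 = 2 := by omega
        simp only [Pc, Pf, h, h']
        norm_num
        exact Pinv k
      · have h' : (n + 1) % 3 = 0 := by omega
        simp only [Pc, Pf, h, h']
        norm_num
    calc Py k * Pz k ^ (n + 1) = (Py k * Pz k ^ n) * Pz k := by rw [pow_succ, ← mul_assoc]
      _ = Pc k n * Pz k ^ n * Py k * Pz k := by rw [ih]
      _ = Pc k n * Pz k ^ n * (Py k * Pz k) := by rw [mul_assoc]
      _ = Pc k n * Pz k ^ n * ((Px k)⁻¹ * Pz k * Py k) := by rw [hyz]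
      _ = Pc k n * (Pz k ^ n * (Px k)⁻¹) * (Pz k * Py k) := by simp only [mul_assoc]
      _ = Pc k n * ((Pf k n)⁻¹ * Pz k ^ n) * (Pz k * Py k) := by rw [Pz_pow_xinv]
      _ = (Pc k n * (Pf k n)⁻¹) * (Pz k ^ n * Pz k) * Py k := by simp only [mul_assoc]
      _ = Pc k (n + 1) * Pz k ^ (n + 1) * Py k := by rw [key, ← pow_succ]

/-- In `P'_{8·3^k}` (`k ≥ 2`), for every natural number `r`:
`y z^r y⁻¹ = z^r` if `r ≡ 0 (mod 3)`; `y z^r y⁻¹ = x⁻¹ z^r` if `r ≡ 1 (mod 3)`; and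
`y z^r y⁻¹ = x y z^r` if `r ≡ 2 (mod 3)`. -/
theorem conj_z_pow_by_y_PGroup (k : ℕ) (hk : 2 ≤ k) (r : ℕ) :
    (r % 3 = 0 → Py k * Pz k ^ r * (Py k)⁻¹ = Pz k ^ r) ∧
    (r % 3 = 1 → Py k * Pz k ^ r * (Py k)⁻¹ = (Px k)⁻¹ * Pz k ^ r) ∧
    (r % 3 = 2 → Py k * Pz k ^ r * (Py k)⁻¹ = Px k * Py k * Pz k ^ r) := by
  have h' : Py k * Pz k ^ r * (Py k)⁻¹ = Pc k r * Pz k ^ r := by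
    rw [Py_z_pow, mul_assoc, mul_inv_cancel, mul_one]
  refine ⟨fun h0 => ?_, fun h1 => ?_, fun h2 => ?_⟩
  · rw [h']; simp [Pc, h0]
  · rw [h']; simp [Pc, h1]
  · rw [h']; simp [Pc, h2]
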